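/- For any ρ, σ ∈ S(d) and r ≥ 0, the total number of r-step walks from ρ to σ on the transposition Cayley graph of S(d) equals the sum over all monotone r-step walks W from ρ to σ of the multinomial coefficient r!/(m₂(W)! ⋯ m_d(W)!), where m_t(W) is the number of steps of colour t in W. -/

import Mathlib

/-- A transposition step `(s t)` of `S(d)` recorded with `s < t`; its colour is `t`. -/
def Step (d : ℕ) : Type := {p : Fin d × Fin d // p.1 < p.2}

/-- The permutation (transposition) corresponding to a step. -/
def stepPerm {d : ℕ} (x : Step d) : Equiv.Perm (Fin d) := Equiv.swap x.1.1 x.1.2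

/-- The colour of a step, i.e. the larger of the two interchanged points. -/
def colour {d : ℕ} (x : Step d) : Fin d := x.1.2

/-- The product of a tuple of steps, taken in order. -/
def stepProd {d r : ℕ} (W : Fin r → Step d) : Equiv.Perm (Fin d) :=
  (List.ofFn fun j => stepPerm (W j)).prod


instance {d : ℕ} : Fintype (Step d) :=
  inferInstanceAs (Fintype {p : Fin d × Fin d // p.1 < p.2})

instance {d : ℕ} : DecidableEq (Step d) :=
  inferInstanceAs (DecidableEq {p : Fin d × Fin d // p.1 < p.2})

/-!
Sort the walks by their colour word `c : Fin r → Fin d`. The number of walks from `ρ` to `σ`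
with colour word `c` is unchanged when `c` is permuted: at two consecutive positions with colours
`a < b`, the map `(x, y) ↦ (x y x, x)` is a product-preserving bijection from pairs of steps of
colours `(a, b)` onto pairs of colours `(b, a)`, because `x` has colour `a < b` and so fixes `b`.
Hence that number only depends on the monotone rearrangement `m` of `c`, and by orbit–stabiliser
for `S(r)` acting on words, exactly `r! / ∏ₜ mₜ!` words have rearrangement `m`.
-/

open Finset Equiv

theorem List.prod_ofFn_eq_of_adjacent {M : Type*} [Monoid M] {n : ℕ} (f g : Fin (n + 1) → M)
    (i : Fin n) (h_ne : ∀ k, k ≠ i.castSucc → k ≠ i.succ → f k = g k)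
    (h_pair : f i.castSucc * f i.succ = g i.castSucc * g i.succ) :
    (ofFn f).prod = (ofFn g).prod := by
  induction n with
  | zero => exact i.elim0
  | succ n ih =>
    cases i using Fin.cases with
    | zero =>
      have h_tail : ∀ k : Fin n, f k.succ.succ = g k.succ.succ := fun k =>
        h_ne _ (Fin.succ_ne_zero _) ((Fin.succ_injective _).ne (Fin.succ_ne_zero k))
      simp only [ofFn_succ, prod_cons, ← mul_assoc, h_tail]
      simpa using congrArg (· * _) h_pair
    | succ j =>
      have h_head : f 0 = g 0 := h_ne 0 (by simp [Fin.ext_iff]) (Fin.succ_ne_zero _).symm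
      rw [ofFn_succ (f := f), ofFn_succ (f := g), prod_cons, prod_cons, h_head,
        ih (fun k => f k.succ) (fun k => g k.succ) j
          (fun k hk₁ hk₂ => h_ne _
            (by rw [← Fin.succ_castSucc]; exact (Fin.succ_injective _).ne hk₁)
            ((Fin.succ_injective _).ne hk₂))
          (by simpa only [Fin.succ_castSucc] using h_pair)]

lemma DomMulAct.ncard_orbit_perm_eq_multinomial {ι α : Type*} [Fintype ι] [DecidableEq ι]
    [Fintype α] [DecidableEq α] (f : ι → α) :
    (MulAction.orbit (Perm ι)ᵈᵐᵃ f).ncard = Nat.multinomial univ fun a => #{i | f i = a} := by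
  have h_stab : Nat.card (MulAction.stabilizer (Perm ι)ᵈᵐᵃ f) =
      ∏ a, (#{i | f i = a}).factorial := by
    rw [← Nat.card_congr (DomMulAct.mk.subtypeEquiv fun _ => Iff.rfl :
      {g : Perm ι // f ∘ g = f} ≃ _), Nat.card_eq_fintype_card, DomMulAct.stabilizer_card]
    simp only [Fintype.card_subtype]
  have h_sum : ∑ a, #{i | f i = a} = Fintype.card ι :=
    (card_eq_sum_card_fiberwise fun _ _ => mem_univ _).symm
  have h := (MulAction.stabilizer (Perm ι)ᵈᵐᵃ f).card_mul_index
  rw [MulAction.index_stabilizer, h_stab, ← Nat.card_congr DomMulAct.mk,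
    Nat.card_eq_fintype_card, Fintype.card_perm, ← h_sum, ← Nat.multinomial_spec] at h
  exact Nat.eq_of_mul_eq_mul_left (by positivity) h

lemma Tuple.coe_filter_comp_sort_eq_orbit {α : Type*} [LinearOrder α] [Fintype α] {n : ℕ}
    {m : Fin n → α} (hm : Monotone m) :
    (({c | c ∘ Tuple.sort c = m} : Finset (Fin n → α)) : Set (Fin n → α)) =
      MulAction.orbit (Perm (Fin n))ᵈᵐᵃ m := by
  ext c
  simp only [coe_filter, mem_univ, true_and, Set.mem_ofPred_eq, MulAction.mem_orbit_iff]
  constructor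
  · intro h
    refine ⟨DomMulAct.mk (Tuple.sort c)⁻¹, ?_⟩
    rw [← h]
    funext j
    simp [DomMulAct.smul_apply]
  · rintro ⟨g, rfl⟩
    obtain ⟨e, rfl⟩ := DomMulAct.mk.surjective g
    change (m ∘ e) ∘ Tuple.sort (m ∘ e) = m
    rw [Tuple.comp_perm_comp_sort_eq_comp_sort, Tuple.sort_eq_refl_iff_monotone.2 hm]
    rfl

lemma Tuple.card_filter_comp_sort_eq_multinomial {α : Type*} [LinearOrder α] [Fintype α]
    {n : ℕ} {m : Fin n → α} (hm : Monotone m) :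
    #{c : Fin n → α | c ∘ Tuple.sort c = m} = Nat.multinomial univ fun a => #{j | m j = a} := by
  rw [← Set.ncard_coe_finset, Tuple.coe_filter_comp_sort_eq_orbit hm,
    DomMulAct.ncard_orbit_perm_eq_multinomial]

open scoped Classical in
lemma Tuple.sum_eq_sum_monotone_multinomial_smul {α M : Type*} [LinearOrder α] [Fintype α]
    [AddCommMonoid M] {n : ℕ} (F : (Fin n → α) → M)
    (hF : ∀ (c : Fin n → α) (e : Perm (Fin n)), F (c ∘ e) = F c) :
    ∑ c, F c = ∑ m with Monotone m, Nat.multinomial univ (fun a => #{j | m j = a}) • F m := by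
  rw [← sum_fiberwise_of_maps_to (g := fun c => c ∘ Tuple.sort c) (t := {m | Monotone m})
    fun c _ => mem_filter.2 ⟨mem_univ _, Tuple.monotone_sort c⟩]
  refine sum_congr rfl fun m hm => ?_
  rw [← Tuple.card_filter_comp_sort_eq_multinomial (mem_filter.1 hm).2, ← sum_const]
  refine sum_congr rfl fun c hc => ?_
  rw [← (mem_filter.1 hc).2, hF]

namespace Step

variable {d : ℕ}

def conj (x y : Step d) (h : colour x < colour y) : Step d :=
  ⟨(stepPerm x y.1.1, y.1.2), by
    have hx : x.1.1 < x.1.2 := x.2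
    have hy : y.1.1 < y.1.2 := y.2
    have hxy : x.1.2 < y.1.2 := h
    simp only [stepPerm, swap_apply_def]
    split_ifs <;> omega⟩

@[simp] lemma colour_conj (x y : Step d) (h : colour x < colour y) :
    colour (conj x y h) = colour y := rfl

lemma stepPerm_conj (x y : Step d) (h : colour x < colour y) :
    stepPerm (conj x y h) = stepPerm x * stepPerm y * (stepPerm x)⁻¹ := by
  have hb : stepPerm x y.1.2 = y.1.2 := swap_apply_of_ne_of_ne (lt_trans x.2 h).ne' (ne_of_gt h)
  change swap (stepPerm x y.1.1) y.1.2 = _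
  rw [← hb, swap_apply_apply]
  rfl

lemma conj_conj (x y : Step d) (h : colour x < colour y) (h' : colour x < colour (conj x y h)) :
    conj x (conj x y h) h' = y :=
  Subtype.ext (Prod.ext (swap_apply_self _ _ _) rfl)

def exchange (x y : Step d) : Step d × Step d :=
  if h : colour x < colour y then (conj x y h, x)
  else if h' : colour y < colour x then (y, conj y x h')
  else (x, y)

lemma exchange_of_lt {x y : Step d} (h : colour x < colour y) :
    exchange x y = (conj x y h, x) :=
  dif_pos h

lemma exchange_of_gt {x y : Step d} (h : colour y < colour x) :
    exchange x y = (y, conj y x h) :=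
  (dif_neg h.not_gt).trans (dif_pos h)

lemma exchange_of_eq {x y : Step d} (h : colour x = colour y) : exchange x y = (x, y) :=
  (dif_neg h.not_lt).trans (dif_neg h.symm.not_lt)

lemma colour_exchange (x y : Step d) :
    colour (exchange x y).1 = colour y ∧ colour (exchange x y).2 = colour x := by
  rcases lt_trichotomy (colour x) (colour y) with h | h | h
  · simp [exchange_of_lt h]
  · simp [exchange_of_eq h, h]
  · simp [exchange_of_gt h]

lemma stepPerm_exchange (x y : Step d) :
    stepPerm (exchange x y).1 * stepPerm (exchange x y).2 = stepPerm x * stepPerm y := by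
  rcases lt_trichotomy (colour x) (colour y) with h | h | h
  · simp [exchange_of_lt h, stepPerm_conj]
  · rw [exchange_of_eq h]
  · rw [exchange_of_gt h, stepPerm_conj, stepPerm, swap_inv, ← mul_assoc, ← mul_assoc,
      swap_mul_self, one_mul]

lemma exchange_exchange (x y : Step d) :
    exchange (exchange x y).1 (exchange x y).2 = (x, y) := by
  rcases lt_trichotomy (colour x) (colour y) with h | h | h
  · rw [exchange_of_lt h, exchange_of_gt (x := conj x y h) h]
    exact Prod.ext rfl (conj_conj _ _ h h)
  · rw [exchange_of_eq h, exchange_of_eq h]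
  · rw [exchange_of_gt h, exchange_of_lt (y := conj y x h) h]
    exact Prod.ext (conj_conj _ _ h h) rfl

end Step

section Walks

variable {d n : ℕ}

def exchangeAt (i : Fin n) (W : Fin (n + 1) → Step d) : Fin (n + 1) → Step d :=
  fun k => if k = i.castSucc then (Step.exchange (W i.castSucc) (W i.succ)).1
    else if k = i.succ then (Step.exchange (W i.castSucc) (W i.succ)).2 else W k

lemma exchangeAt_castSucc (i : Fin n) (W : Fin (n + 1) → Step d) :
    exchangeAt i W i.castSucc = (Step.exchange (W i.castSucc) (W i.succ)).1 :=
  if_pos rfl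

lemma exchangeAt_succ (i : Fin n) (W : Fin (n + 1) → Step d) :
    exchangeAt i W i.succ = (Step.exchange (W i.castSucc) (W i.succ)).2 :=
  (if_neg Fin.castSucc_lt_succ.ne').trans (if_pos rfl)

lemma exchangeAt_of_ne {i : Fin n} {k : Fin (n + 1)} (h₁ : k ≠ i.castSucc) (h₂ : k ≠ i.succ)
    (W : Fin (n + 1) → Step d) : exchangeAt i W k = W k :=
  (if_neg h₁).trans (if_neg h₂)

lemma exchangeAt_exchangeAt (i : Fin n) (W : Fin (n + 1) → Step d) :
    exchangeAt i (exchangeAt i W) = W := by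
  have h := Step.exchange_exchange (W i.castSucc) (W i.succ)
  funext k
  by_cases h₁ : k = i.castSucc
  · rw [h₁, exchangeAt_castSucc, exchangeAt_castSucc, exchangeAt_succ, h]
  by_cases h₂ : k = i.succ
  · rw [h₂, exchangeAt_succ, exchangeAt_castSucc, exchangeAt_succ, h]
  rw [exchangeAt_of_ne h₁ h₂, exchangeAt_of_ne h₁ h₂]

lemma stepProd_exchangeAt (i : Fin n) (W : Fin (n + 1) → Step d) :
    stepProd (exchangeAt i W) = stepProd W :=
  List.prod_ofFn_eq_of_adjacent _ _ i (fun k h₁ h₂ => by rw [exchangeAt_of_ne h₁ h₂])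
    (by rw [exchangeAt_castSucc, exchangeAt_succ, Step.stepPerm_exchange])

lemma colour_comp_exchangeAt (i : Fin n) (W : Fin (n + 1) → Step d) :
    colour ∘ exchangeAt i W = colour ∘ W ∘ swap i.castSucc i.succ := by
  have h := Step.colour_exchange (W i.castSucc) (W i.succ)
  funext k
  by_cases h₁ : k = i.castSucc
  · simp [h₁, exchangeAt_castSucc, h.1]
  by_cases h₂ : k = i.succ
  · simp [h₂, exchangeAt_succ, h.2]
  simp [exchangeAt_of_ne h₁ h₂, swap_apply_of_ne_of_ne h₁ h₂]

end Walks

section Counting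

variable {d r : ℕ} (ρ σ : Perm (Fin d))

def walksWithColours (c : Fin r → Fin d) : Finset (Fin r → Step d) :=
  {W | ρ * stepProd W = σ ∧ colour ∘ W = c}

lemma card_walksWithColours_comp_swap {n : ℕ} (c : Fin (n + 1) → Fin d) (i : Fin n) :
    #(walksWithColours ρ σ (c ∘ swap i.castSucc i.succ)) = #(walksWithColours ρ σ c) := by
  have maps : ∀ c' : Fin (n + 1) → Fin d, ∀ W ∈ walksWithColours ρ σ c',
      exchangeAt i W ∈ walksWithColours ρ σ (c' ∘ swap i.castSucc i.succ) := by
    intro c' W hW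
    simp only [walksWithColours, mem_filter, mem_univ, true_and] at hW ⊢
    rw [stepProd_exchangeAt, colour_comp_exchangeAt, ← hW.2]
    exact ⟨hW.1, rfl⟩
  refine card_nbij' (exchangeAt i) (exchangeAt i) (fun W hW => ?_) (maps c)
    (fun W _ => exchangeAt_exchangeAt i W) (fun W _ => exchangeAt_exchangeAt i W)
  have h := maps _ W hW
  rwa [Function.comp_assoc, ← Perm.coe_mul, swap_mul_self, Perm.coe_one,
    Function.comp_id] at h

lemma card_walksWithColours_comp_perm (c : Fin r → Fin d) (e : Perm (Fin r)) :
    #(walksWithColours ρ σ (c ∘ e)) = #(walksWithColours ρ σ c) := by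
  cases r with
  | zero => rw [Subsingleton.elim e 1]; rfl
  | succ n =>
    have he : e ∈ Submonoid.closure (Set.range fun i : Fin n => swap i.castSucc i.succ) := by
      rw [Perm.mclosure_swap_castSucc_succ]; trivial
    induction he using Submonoid.closure_induction generalizing c with
    | mem x hx =>
      obtain ⟨i, rfl⟩ := hx
      exact card_walksWithColours_comp_swap ρ σ c i
    | one => rfl
    | mul x y _ _ ihx ihy =>
      rw [Perm.coe_mul, ← Function.comp_assoc, ihy, ihx]

lemma card_filter_eq_sum_card_walksWithColours :
    #{W : Fin r → Step d | ρ * stepProd W = σ} =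
      ∑ c : Fin r → Fin d, #(walksWithColours ρ σ c) := by
  rw [card_eq_sum_card_fiberwise (f := (colour ∘ ·)) (t := univ) fun _ _ => mem_univ _]
  simp only [walksWithColours, filter_filter]

open scoped Classical in
lemma sum_monotone_walks_eq_sum_card_walksWithColours_smul {M : Type*} [AddCommMonoid M]
    (F : (Fin r → Fin d) → M) :
    ∑ W with ρ * stepProd W = σ ∧ Monotone (colour ∘ W), F (colour ∘ W) =
      ∑ m with Monotone m, #(walksWithColours ρ σ m) • F m := by
  rw [← sum_fiberwise_of_maps_to (g := (colour ∘ ·)) (t := {m | Monotone m})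
    fun W hW => mem_filter.2 ⟨mem_univ _, (mem_filter.1 hW).2.2⟩]
  refine sum_congr rfl fun m hm => ?_
  rw [← sum_const]
  refine sum_congr ?_ fun W hW => by rw [(mem_filter.1 hW).2.2]
  ext W
  simp only [walksWithColours, mem_filter, mem_univ, true_and]
  constructor
  · rintro ⟨⟨hW, -⟩, hc⟩
    exact ⟨hW, hc⟩
  · rintro ⟨hW, rfl⟩
    exact ⟨⟨hW, (mem_filter.1 hm).2⟩, rfl⟩

end Counting

open scoped Classical in
/-- The total number of `r`-step walks from `ρ` to `σ` equals the sum, over all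
monotone `r`-step walks `W` from `ρ` to `σ`, of the multinomial coefficient
`r! / (m₂(W)! ⋯ m_d(W)!)` of the colour multiplicities of `W`. -/
theorem stmt19 (d r : ℕ) (ρ σ : Equiv.Perm (Fin d)) :
    (Finset.univ.filter (fun W : Fin r → Step d => ρ * stepProd W = σ)).card =
      ∑ W ∈ Finset.univ.filter (fun W : Fin r → Step d =>
          ρ * stepProd W = σ ∧ Monotone fun j => colour (W j)),
        Nat.multinomial Finset.univ
          (fun t : Fin d => (Finset.univ.filter (fun j => colour (W j) = t)).card) := by
  rw [card_filter_eq_sum_card_walksWithColours,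
    Tuple.sum_eq_sum_monotone_multinomial_smul (fun c => #(walksWithColours ρ σ c))
      (card_walksWithColours_comp_perm ρ σ)]
  refine (sum_congr rfl fun m _ => ?_).trans
    (sum_monotone_walks_eq_sum_card_walksWithColours_smul ρ σ
      fun m => Nat.multinomial univ fun t => #{j | m j = t}).symm
  rw [smul_eq_mul, smul_eq_mul, mul_comm]
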